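/- The class ℒ(RDFAwtl) is not closed under union, intersection with regular sets, alphabetic morphisms, or commutative closure. In particular: L_= = { w ∈ {a,b}* : |w|_a = |w|_b } and L_{2=} = { w ∈ {a,b}* : 2·|w|_a = |w|_b } are each accepted by DFAwtls (hence by RDFAwtls), but L_∨ = L_= ∪ L_{2=} is not accepted by any RDFAwtl; L_= ∩ a*b* = { aⁿbⁿ : n ≥ 0 } is not accepted by any RDFAwtl; the image of an RDFAwtl language under the letter-to-letter morphism a↦a, b↦b, c↦a, d↦b can fail to lie in ℒ(RDFAwtl); and com((ab)* ∪ (abb)*) = L_∨ ∉ ℒ(RDFAwtl). -/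

import Mathlib

/-!
The positive statements are explicit DFAwtls, each verified by a count invariant describing
acceptance from every configuration, together with the identities `φ(M) = L_∨ = com R`.

For the negative ones, run a deterministic RDFAwtl on `a^n b^m`. While both blocks are nonempty
the current state alone decides whether the machine deletes the first `a`, deletes the first `b`,
or takes an end-of-tape step, so the run follows one abstract run on (state, #a deleted,
#b deleted) that does not depend on `n, m`. By pigeonhole this abstract run halts, cycles without
deleting, or revisits a state after deleting `p` a's and `r` b's with `p + r > 0`; in every case
acceptance of `a^n b^m` is, for large `n, m`, invariant under `(n, m) ↦ (n + p, m + r)` for some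
`p + r > 0`. For `L_∨` this is impossible, since `(n, n)` and `(n, 2n)` both belong. For
`a^n b^n` it forces `p = r > 0`, so the abstract run reaches a point where `x` a's and `y > 0`
b's are deleted; from there `a^(x+i) b^(y+j)` and the unsorted word `a^x b^y a^i b^j` lead to
the same configuration, so the machine accepts a word outside `a*b*`.
-/

/-- A nondeterministic finite automaton with translucent letters (NFAwtl). -/
structure NFAwtl (Q α : Type) where
  τ : Q → Set α
  I : Set Q
  F : Set Q
  δ : Q → α → Set Q
  tr : ∀ q a, a ∈ τ q → δ q a = ∅

namespace NFAwtl

variable {Q α : Type}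

/-- One computation step of an NFAwtl: delete the leftmost non-translucent letter
and change state (the head returns to the left end). -/
def Step (A : NFAwtl Q α) : Q × List α → Q × List α → Prop := fun c c' =>
  ∃ u a v, c.2 = u ++ a :: v ∧ (∀ x ∈ u, x ∈ A.τ c.1) ∧ a ∉ A.τ c.1 ∧
    c'.1 ∈ A.δ c.1 a ∧ c'.2 = u ++ v

/-- Acceptance: from some initial state, reach a configuration whose remaining
letters are all translucent for a final state. -/
def Accepts (A : NFAwtl Q α) (w : List α) : Prop :=
  ∃ q₀ ∈ A.I, ∃ q w', Relation.ReflTransGen A.Step (q₀, w) (q, w') ∧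
    (∀ x ∈ w', x ∈ A.τ q) ∧ q ∈ A.F

def lang (A : NFAwtl Q α) : Set (List α) := { w | A.Accepts w }

/-- A DFAwtl: single initial state and at most one transition per state/letter. -/
def Deterministic (A : NFAwtl Q α) : Prop :=
  (∃ q₀, A.I = {q₀}) ∧ ∀ q a, (A.δ q a).Subsingleton

end NFAwtl

/-- A repetitive NFAwtl (RNFAwtl): on the end-of-tape marker it may accept
(states in `Facc`) or change state via `δend` and continue. -/
structure RNFAwtl (Q α : Type) where
  τ : Q → Set α
  I : Set Q
  δ : Q → α → Set Q
  δend : Q → Set Q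
  Facc : Set Q
  tr : ∀ q a, a ∈ τ q → δ q a = ∅
  accEnd : ∀ q, q ∈ Facc → δend q = ∅

namespace RNFAwtl

variable {Q α : Type}

/-- One computation step of an RNFAwtl: either delete the leftmost
non-translucent letter, or, when all remaining letters are translucent,
change state via a `◁`-transition and continue. -/
def Step (A : RNFAwtl Q α) : Q × List α → Q × List α → Prop := fun c c' =>
  (∃ u a v, c.2 = u ++ a :: v ∧ (∀ x ∈ u, x ∈ A.τ c.1) ∧ a ∉ A.τ c.1 ∧
    c'.1 ∈ A.δ c.1 a ∧ c'.2 = u ++ v)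
  ∨ ((∀ x ∈ c.2, x ∈ A.τ c.1) ∧ c'.1 ∈ A.δend c.1 ∧ c'.2 = c.2)

def Accepts (A : RNFAwtl Q α) (w : List α) : Prop :=
  ∃ q₀ ∈ A.I, ∃ q w', Relation.ReflTransGen A.Step (q₀, w) (q, w') ∧
    (∀ x ∈ w', x ∈ A.τ q) ∧ q ∈ A.Facc

def lang (A : RNFAwtl Q α) : Set (List α) := { w | A.Accepts w }

/-- An RDFAwtl: single initial state and deterministic transitions. -/
def Deterministic (A : RNFAwtl Q α) : Prop :=
  (∃ q₀, A.I = {q₀}) ∧ (∀ q a, (A.δ q a).Subsingleton) ∧ ∀ q, (A.δend q).Subsingleton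

end RNFAwtl

/-- A non-returning repetitive NFAwtl (nr-NFAwtl): the head continues from the
position of the last deleted letter; on the end-of-tape marker it may change
state and return the head to the left end. -/
structure NrNFAwtl (Q α : Type) where
  τ : Q → Set α
  I : Set Q
  δ : Q → α → Set Q
  δend : Q → Set Q
  Facc : Set Q
  tr : ∀ q a, a ∈ τ q → δ q a = ∅
  accEnd : ∀ q, q ∈ Facc → δend q = ∅

namespace NrNFAwtl

variable {Q α : Type}

/-- Configurations are `(x, q, w)`: `x` is the already-skipped prefix, the head
is on the first letter of `w`. -/
def Step (A : NrNFAwtl Q α) :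
    List α × Q × List α → List α × Q × List α → Prop := fun c c' =>
  (∃ u a v, c.2.2 = u ++ a :: v ∧ (∀ x ∈ u, x ∈ A.τ c.2.1) ∧ a ∉ A.τ c.2.1 ∧
    c'.2.1 ∈ A.δ c.2.1 a ∧ c'.1 = c.1 ++ u ∧ c'.2.2 = v)
  ∨ ((∀ x ∈ c.2.2, x ∈ A.τ c.2.1) ∧ c'.2.1 ∈ A.δend c.2.1 ∧ c'.1 = [] ∧
    c'.2.2 = c.1 ++ c.2.2)

def Accepts (A : NrNFAwtl Q α) (w : List α) : Prop :=
  ∃ q₀ ∈ A.I, ∃ x q w', Relation.ReflTransGen A.Step ([], q₀, w) (x, q, w') ∧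
    (∀ y ∈ w', y ∈ A.τ q) ∧ q ∈ A.Facc

def lang (A : NrNFAwtl Q α) : Set (List α) := { w | A.Accepts w }

def Deterministic (A : NrNFAwtl Q α) : Prop :=
  (∃ q₀, A.I = {q₀}) ∧ (∀ q a, (A.δ q a).Subsingleton) ∧ ∀ q, (A.δend q).Subsingleton

end NrNFAwtl

/-- A non-repetitive non-returning NFAwtl (nr-nr-NFAwtl): non-returning, and it
must halt as soon as all remaining letters to the right are translucent. -/
structure NrnrNFAwtl (Q α : Type) where
  τ : Q → Set α
  I : Set Q
  F : Set Q
  δ : Q → α → Set Q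
  tr : ∀ q a, a ∈ τ q → δ q a = ∅

namespace NrnrNFAwtl

variable {Q α : Type}

def Step (A : NrnrNFAwtl Q α) :
    List α × Q × List α → List α × Q × List α → Prop := fun c c' =>
  ∃ u a v, c.2.2 = u ++ a :: v ∧ (∀ x ∈ u, x ∈ A.τ c.2.1) ∧ a ∉ A.τ c.2.1 ∧
    c'.2.1 ∈ A.δ c.2.1 a ∧ c'.1 = c.1 ++ u ∧ c'.2.2 = v

def Accepts (A : NrnrNFAwtl Q α) (w : List α) : Prop :=
  ∃ q₀ ∈ A.I, ∃ x q w', Relation.ReflTransGen A.Step ([], q₀, w) (x, q, w') ∧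
    (∀ y ∈ w', y ∈ A.τ q) ∧ q ∈ A.F

def lang (A : NrnrNFAwtl Q α) : Set (List α) := { w | A.Accepts w }

def Deterministic (A : NrnrNFAwtl Q α) : Prop :=
  (∃ q₀, A.I = {q₀}) ∧ ∀ q a, (A.δ q a).Subsingleton

end NrnrNFAwtl

/-- Language classes. -/
def NFAwtlLangs (α : Type) [Fintype α] : Set (Set (List α)) :=
  { L | ∃ (Q : Type) (_ : Fintype Q) (A : NFAwtl Q α), A.lang = L }

def DFAwtlLangs (α : Type) [Fintype α] : Set (Set (List α)) :=
  { L | ∃ (Q : Type) (_ : Fintype Q) (A : NFAwtl Q α), A.Deterministic ∧ A.lang = L }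

def RNFAwtlLangs (α : Type) [Fintype α] : Set (Set (List α)) :=
  { L | ∃ (Q : Type) (_ : Fintype Q) (A : RNFAwtl Q α), A.lang = L }

def RDFAwtlLangs (α : Type) [Fintype α] : Set (Set (List α)) :=
  { L | ∃ (Q : Type) (_ : Fintype Q) (A : RNFAwtl Q α), A.Deterministic ∧ A.lang = L }

def NrNFAwtlLangs (α : Type) [Fintype α] : Set (Set (List α)) :=
  { L | ∃ (Q : Type) (_ : Fintype Q) (A : NrNFAwtl Q α), A.lang = L }

def NrDFAwtlLangs (α : Type) [Fintype α] : Set (Set (List α)) :=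
  { L | ∃ (Q : Type) (_ : Fintype Q) (A : NrNFAwtl Q α), A.Deterministic ∧ A.lang = L }

def NrnrNFAwtlLangs (α : Type) [Fintype α] : Set (Set (List α)) :=
  { L | ∃ (Q : Type) (_ : Fintype Q) (A : NrnrNFAwtl Q α), A.lang = L }

def NrnrDFAwtlLangs (α : Type) [Fintype α] : Set (Set (List α)) :=
  { L | ∃ (Q : Type) (_ : Fintype Q) (A : NrnrNFAwtl Q α), A.Deterministic ∧ A.lang = L }

/-- The two-letter alphabet {a, b}. -/
inductive AB : Type
  | a | b
deriving DecidableEq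

instance : Fintype AB where
  elems := {AB.a, AB.b}
  complete := by intro x; cases x <;> simp

/-- The four-letter alphabet {a, b, c, d}. -/
inductive ABCD : Type
  | a | b | c | d
deriving DecidableEq

instance : Fintype ABCD where
  elems := {ABCD.a, ABCD.b, ABCD.c, ABCD.d}
  complete := by intro x; cases x <;> simp

/-- The alphabetic morphism a ↦ a, b ↦ b, c ↦ a, d ↦ b. -/
def φ : ABCD → AB
  | ABCD.a => AB.a
  | ABCD.b => AB.b
  | ABCD.c => AB.a
  | ABCD.d => AB.b

def Leq : Set (List AB) := { w | w.count AB.a = w.count AB.b }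

def L2eq : Set (List AB) := { w | 2 * w.count AB.a = w.count AB.b }

def Lor : Set (List AB) := Leq ∪ L2eq

/-- The regular language a*b*. -/
def asbs : Set (List AB) :=
  { w | ∃ n m, w = List.replicate n AB.a ++ List.replicate m AB.b }

/-- Commutative closure. -/
def com (L : Set (List AB)) : Set (List AB) :=
  { w | ∃ u ∈ L, ∀ x : AB, u.count x = w.count x }

/-- The regular language (ab)* ∪ (abb)*. -/
def R : Set (List AB) :=
  { w | ∃ n, w = (List.replicate n [AB.a, AB.b]).flatten } ∪
  { w | ∃ n, w = (List.replicate n [AB.a, AB.b, AB.b]).flatten }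

/-- L_= over {a,b} united with L'_{2=} over {c,d}. -/
def M : Set (List ABCD) :=
  { w | (∀ x ∈ w, x = ABCD.a ∨ x = ABCD.b) ∧ w.count ABCD.a = w.count ABCD.b } ∪
  { w | (∀ x ∈ w, x = ABCD.c ∨ x = ABCD.d) ∧ 2 * w.count ABCD.c = w.count ABCD.d }

open Relation

namespace List

variable {α : Type} {S : Set α}

theorem exists_eq_append_cons_of_not_forall_mem {w : List α} (h : ¬ ∀ x ∈ w, x ∈ S) :
    ∃ u x v, w = u ++ x :: v ∧ (∀ y ∈ u, y ∈ S) ∧ x ∉ S := by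
  induction w with
  | nil => simp at h
  | cons y t ih =>
    by_cases hy : y ∈ S
    · obtain ⟨u, x, v, rfl, hu, hx⟩ := ih (by simpa [hy] using h)
      exact ⟨y :: u, x, v, rfl, by simpa [hy] using hu, hx⟩
    · exact ⟨[], y, t, rfl, by simp, hy⟩

theorem append_cons_inj_of_forall_mem_of_not_mem {u₁ u₂ v₁ v₂ : List α} {x₁ x₂ : α}
    (h : u₁ ++ x₁ :: v₁ = u₂ ++ x₂ :: v₂) (hu₁ : ∀ y ∈ u₁, y ∈ S) (hx₁ : x₁ ∉ S)
    (hu₂ : ∀ y ∈ u₂, y ∈ S) (hx₂ : x₂ ∉ S) : u₁ = u₂ ∧ x₁ = x₂ ∧ v₁ = v₂ := by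
  classical
  have prefix_eq : ∀ {u x v}, (∀ y ∈ u, y ∈ S) → x ∉ S →
      (u ++ x :: v).takeWhile (· ∈ S) = u := fun hu hx => by
    rw [takeWhile_append_of_pos (by simpa using hu), takeWhile_cons_of_neg (by simpa using hx),
      append_nil]
  obtain rfl : u₁ = u₂ := by rw [← prefix_eq hu₁ hx₁, h, prefix_eq hu₂ hx₂]
  simpa using h

end List

namespace NFAwtl

variable {Q α : Type} (A : NFAwtl Q α)

/-- `hstop` states "every letter of `w` is translucent in `q`" through letter counts, the form
in which the invariants below are written. -/
theorem lang_eq_of_unfold [DecidableEq α] {q₀ : Q} (hI : A.I = {q₀}) (P : Q → List α → Prop)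
    (hstop : ∀ q w, (∀ x ∉ A.τ q, w.count x = 0) → (P q w ↔ q ∈ A.F))
    (hread : ∀ q u x v, (∀ y ∈ u, y ∈ A.τ q) → x ∉ A.τ q →
      (P q (u ++ x :: v) ↔ ∃ q' ∈ A.δ q x, P q' (u ++ v))) :
    A.lang = {w | P q₀ w} := by
  have sound : ∀ c d : Q × List α, ReflTransGen A.Step c d →
      (∀ x ∈ d.2, x ∈ A.τ d.1) → d.1 ∈ A.F → P c.1 c.2 := by
    intro c d hrun hτ hF
    induction hrun using ReflTransGen.head_induction_on with
    | refl => exact (hstop _ _ fun x hx => List.count_eq_zero.2 (mt (hτ x) hx)).2 hF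
    | head hstep _ ih =>
      obtain ⟨u, x, v, hc, hu, hx, hq', hc'⟩ := hstep
      rw [hc, hread _ u x v hu hx]
      exact ⟨_, hq', hc' ▸ ih⟩
  have complete : ∀ n q w, w.length = n → P q w →
      ∃ q' w', ReflTransGen A.Step (q, w) (q', w') ∧ (∀ x ∈ w', x ∈ A.τ q') ∧ q' ∈ A.F := by
    intro n
    induction n using Nat.strong_induction_on with
    | _ n ih =>
      intro q w hn hP
      by_cases hτ : ∀ x ∈ w, x ∈ A.τ q
      · exact ⟨q, w, .refl, hτ,
          (hstop q w fun x hx => List.count_eq_zero.2 (mt (hτ x) hx)).1 hP⟩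
      obtain ⟨u, x, v, rfl, hu, hx⟩ := List.exists_eq_append_cons_of_not_forall_mem hτ
      obtain ⟨q', hq', hP'⟩ := (hread q u x v hu hx).1 hP
      obtain ⟨q'', w'', hrun, hacc⟩ := ih _ (by rw [← hn]; simp) q' (u ++ v) rfl hP'
      exact ⟨q'', w'', .head ⟨u, x, v, rfl, hu, hx, hq', rfl⟩ hrun, hacc⟩
  ext w
  refine ⟨fun ⟨q, hq, q', w', hrun, hτ, hF⟩ => ?_, fun hP => ⟨q₀, hI ▸ rfl, complete _ q₀ w rfl hP⟩⟩
  obtain rfl : q = q₀ := by simpa [hI] using hq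
  exact sound _ (q', w') hrun hτ hF

end NFAwtl

inductive EqState : Type
  | start | seekB | seekA
  deriving DecidableEq

instance : Fintype EqState where
  elems := {.start, .seekB, .seekA}
  complete x := by cases x <;> simp

def eqDFA : NFAwtl EqState AB where
  τ | .start => ∅ | .seekB => {.a} | .seekA => {.b}
  I := {.start}
  F := {.start}
  δ
    | .start, .a => {.seekB} | .start, .b => {.seekA}
    | .seekB, .b => {.start} | .seekA, .a => {.start}
    | _, _ => ∅
  tr q x h := by cases q <;> cases x <;> simp_all

def eqInv : EqState → List AB → Prop
  | .start, w => w.count .a = w.count .b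
  | .seekB, w => w.count .b = w.count .a + 1
  | .seekA, w => w.count .a = w.count .b + 1

theorem eqDFA_lang : eqDFA.lang = Leq := by
  refine eqDFA.lang_eq_of_unfold rfl eqInv (fun q w hw => ?_) (fun q u x v _ hx => ?_)
  · have ha := hw .a
    have hb := hw .b
    cases q <;> simp [eqDFA, eqInv] at ha hb ⊢ <;> omega
  · cases q <;> cases x <;> simp [eqDFA, eqInv, List.count_append] at hx ⊢ <;> omega

theorem eqDFA_deterministic : eqDFA.Deterministic :=
  ⟨⟨_, rfl⟩, fun q x => by cases q <;> cases x <;> simp [eqDFA]⟩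

inductive TwoEqState : Type
  | start | seekBB | seekB | seekA
  deriving DecidableEq

instance : Fintype TwoEqState where
  elems := {.start, .seekBB, .seekB, .seekA}
  complete x := by cases x <;> simp

def twoEqDFA : NFAwtl TwoEqState AB where
  τ | .start => ∅ | .seekBB => {.a} | .seekB => {.a} | .seekA => {.b}
  I := {.start}
  F := {.start}
  δ
    | .start, .a => {.seekBB} | .start, .b => {.seekA}
    | .seekBB, .b => {.seekB} | .seekB, .b => {.start} | .seekA, .a => {.seekB}
    | _, _ => ∅
  tr q x h := by cases q <;> cases x <;> simp_all

def twoEqInv : TwoEqState → List AB → Prop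
  | .start, w => 2 * w.count .a = w.count .b
  | .seekBB, w => w.count .b = 2 * w.count .a + 2
  | .seekB, w => w.count .b = 2 * w.count .a + 1
  | .seekA, w => 2 * w.count .a = w.count .b + 1

theorem twoEqDFA_lang : twoEqDFA.lang = L2eq := by
  refine twoEqDFA.lang_eq_of_unfold rfl twoEqInv (fun q w hw => ?_) (fun q u x v _ hx => ?_)
  · have ha := hw .a
    have hb := hw .b
    cases q <;> simp [twoEqDFA, twoEqInv] at ha hb ⊢ <;> omega
  · cases q <;> cases x <;> simp [twoEqDFA, twoEqInv, List.count_append] at hx ⊢ <;> omega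

theorem twoEqDFA_deterministic : twoEqDFA.Deterministic :=
  ⟨⟨_, rfl⟩, fun q x => by cases q <;> cases x <;> simp [twoEqDFA]⟩

inductive MState : Type
  | start | ab | abSeekB | abSeekA | cd | cdSeekDD | cdSeekD | cdSeekC
  deriving DecidableEq

instance : Fintype MState where
  elems := {.start, .ab, .abSeekB, .abSeekA, .cd, .cdSeekDD, .cdSeekD, .cdSeekC}
  complete x := by cases x <;> simp

def mDFA : NFAwtl MState ABCD where
  τ
    | .abSeekB => {.a} | .abSeekA => {.b} | .cdSeekDD => {.c} | .cdSeekD => {.c}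
    | .cdSeekC => {.d} | _ => ∅
  I := {.start}
  F := {.start, .ab, .cd}
  δ
    | .start, .a => {.abSeekB} | .start, .b => {.abSeekA}
    | .start, .c => {.cdSeekDD} | .start, .d => {.cdSeekC}
    | .ab, .a => {.abSeekB} | .ab, .b => {.abSeekA}
    | .abSeekB, .b => {.ab} | .abSeekA, .a => {.ab}
    | .cd, .c => {.cdSeekDD} | .cd, .d => {.cdSeekC}
    | .cdSeekDD, .d => {.cdSeekD} | .cdSeekD, .d => {.cd} | .cdSeekC, .c => {.cdSeekD}
    | _, _ => ∅
  tr q x h := by cases q <;> cases x <;> simp_all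

def mInv : MState → List ABCD → Prop
  | .start, w => (w.count .c = 0 ∧ w.count .d = 0 ∧ w.count .a = w.count .b) ∨
      (w.count .a = 0 ∧ w.count .b = 0 ∧ 2 * w.count .c = w.count .d)
  | .ab, w => w.count .c = 0 ∧ w.count .d = 0 ∧ w.count .a = w.count .b
  | .abSeekB, w => w.count .c = 0 ∧ w.count .d = 0 ∧ w.count .b = w.count .a + 1
  | .abSeekA, w => w.count .c = 0 ∧ w.count .d = 0 ∧ w.count .a = w.count .b + 1
  | .cd, w => w.count .a = 0 ∧ w.count .b = 0 ∧ 2 * w.count .c = w.count .d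
  | .cdSeekDD, w => w.count .a = 0 ∧ w.count .b = 0 ∧ w.count .d = 2 * w.count .c + 2
  | .cdSeekD, w => w.count .a = 0 ∧ w.count .b = 0 ∧ w.count .d = 2 * w.count .c + 1
  | .cdSeekC, w => w.count .a = 0 ∧ w.count .b = 0 ∧ 2 * w.count .c = w.count .d + 1

theorem ABCD.forall_mem_eq_a_or_eq_b_iff (w : List ABCD) :
    (∀ x ∈ w, x = .a ∨ x = .b) ↔ w.count .c = 0 ∧ w.count .d = 0 := by
  simp only [List.count_eq_zero]
  refine ⟨fun h => ⟨fun hc => by simpa using h _ hc, fun hd => by simpa using h _ hd⟩, ?_⟩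
  rintro ⟨hc, hd⟩ x hx
  cases x <;> simp_all

theorem ABCD.forall_mem_eq_c_or_eq_d_iff (w : List ABCD) :
    (∀ x ∈ w, x = .c ∨ x = .d) ↔ w.count .a = 0 ∧ w.count .b = 0 := by
  simp only [List.count_eq_zero]
  refine ⟨fun h => ⟨fun ha => by simpa using h _ ha, fun hb => by simpa using h _ hb⟩, ?_⟩
  rintro ⟨ha, hb⟩ x hx
  cases x <;> simp_all

theorem mDFA_lang : mDFA.lang = M := by
  rw [mDFA.lang_eq_of_unfold rfl mInv (fun q w hw => ?_) (fun q u x v _ hx => ?_)]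
  · ext w
    simp [M, mInv, ABCD.forall_mem_eq_a_or_eq_b_iff, ABCD.forall_mem_eq_c_or_eq_d_iff, and_assoc]
  · have ha := hw .a
    have hb := hw .b
    have hc := hw .c
    have hd := hw .d
    cases q <;> simp [mDFA, mInv] at ha hb hc hd ⊢ <;> omega
  · cases q <;> cases x <;> simp [mDFA, mInv, List.count_append] at hx ⊢ <;> omega

theorem mDFA_deterministic : mDFA.Deterministic :=
  ⟨⟨_, rfl⟩, fun q x => by cases q <;> cases x <;> simp [mDFA]⟩

theorem count_map_φ_a (w : List ABCD) :
    (w.map φ).count .a = w.count .a + w.count .c := by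
  induction w with
  | nil => rfl
  | cons x t ih => cases x <;> simp [φ, ih] <;> omega

theorem count_map_φ_b (w : List ABCD) :
    (w.map φ).count .b = w.count .b + w.count .d := by
  induction w with
  | nil => rfl
  | cons x t ih => cases x <;> simp [φ, ih] <;> omega

def AB.toABCD : AB → ABCD
  | .a => .a | .b => .b

def AB.toCD : AB → ABCD
  | .a => .c | .b => .d

theorem AB.toABCD_injective : Function.Injective AB.toABCD := by
  intro x y; cases x <;> cases y <;> simp [AB.toABCD]

theorem AB.toCD_injective : Function.Injective AB.toCD := by
  intro x y; cases x <;> cases y <;> simp [AB.toCD]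

theorem map_φ_map_toABCD (w : List AB) : (w.map AB.toABCD).map φ = w := by
  rw [List.map_map]; convert List.map_id w; funext x; cases x <;> rfl

theorem map_φ_map_toCD (w : List AB) : (w.map AB.toCD).map φ = w := by
  rw [List.map_map]; convert List.map_id w; funext x; cases x <;> rfl

theorem image_map_φ_M_eq_Lor : List.map φ '' M = Lor := by
  ext w
  constructor
  · rintro ⟨u, ⟨hu, hcount⟩ | ⟨hu, hcount⟩, rfl⟩
    · rw [ABCD.forall_mem_eq_a_or_eq_b_iff] at hu
      show _ = _ ∨ _
      rw [count_map_φ_a, count_map_φ_b]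
      omega
    · rw [ABCD.forall_mem_eq_c_or_eq_d_iff] at hu
      show _ ∨ _ = _
      rw [count_map_φ_a, count_map_φ_b]
      omega
  · rintro (hw | hw)
    · refine ⟨w.map AB.toABCD, Or.inl ⟨?_, ?_⟩, map_φ_map_toABCD w⟩
      · simp only [List.mem_map]; rintro _ ⟨x, -, rfl⟩; cases x <;> simp [AB.toABCD]
      · change (w.map AB.toABCD).count (AB.toABCD .a) = (w.map AB.toABCD).count (AB.toABCD .b)
        rw [List.count_map_of_injective _ _ AB.toABCD_injective,
          List.count_map_of_injective _ _ AB.toABCD_injective]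
        exact hw
    · refine ⟨w.map AB.toCD, Or.inr ⟨?_, ?_⟩, map_φ_map_toCD w⟩
      · simp only [List.mem_map]; rintro _ ⟨x, -, rfl⟩; cases x <;> simp [AB.toCD]
      · change 2 * (w.map AB.toCD).count (AB.toCD .a) = (w.map AB.toCD).count (AB.toCD .b)
        rw [List.count_map_of_injective _ _ AB.toCD_injective,
          List.count_map_of_injective _ _ AB.toCD_injective]
        exact hw

theorem com_R_eq_Lor : com R = Lor := by
  ext w
  constructor
  · rintro ⟨u, ⟨n, rfl⟩ | ⟨n, rfl⟩, hcount⟩ <;>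
      have ha := hcount .a <;> have hb := hcount .b <;> simp [List.count_flatten] at ha hb
    · exact Or.inl (show w.count .a = w.count .b by omega)
    · exact Or.inr (show 2 * w.count .a = w.count .b by omega)
  · rintro (hw | hw) <;> change _ = _ at hw
    · refine ⟨_, Or.inl ⟨w.count .a, rfl⟩, fun x => ?_⟩
      cases x <;> simp [List.count_flatten, hw]
    · refine ⟨_, Or.inr ⟨w.count .a, rfl⟩, fun x => ?_⟩
      cases x <;> simp [List.count_flatten, ← hw, mul_comm]

theorem Relation.exists_transGen_map_eq_of_forall_exists {α β : Type} [Finite β]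
    {r : α → α → Prop} (π : α → β) {a : α} (h : ∀ c, ReflTransGen r a c → ∃ c', r c c') :
    ∃ c c', ReflTransGen r a c ∧ TransGen r c c' ∧ π c = π c' := by
  choose! next hnext using h
  have hreach : ∀ t, ReflTransGen r a (next^[t] a) := by
    intro t
    induction t with
    | zero => exact .refl
    | succ t ih => rw [Function.iterate_succ_apply']; exact ih.tail (hnext _ ih)
  have hchain : ∀ s t, s < t → TransGen r (next^[s] a) (next^[t] a) := by
    intro s t hst
    induction t, hst using Nat.le_induction with
    | base => rw [Function.iterate_succ_apply']; exact .single (hnext _ (hreach s))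
    | succ t _ ih => rw [Function.iterate_succ_apply']; exact ih.tail (hnext _ (hreach t))
  obtain ⟨s, t, hst, heq⟩ := Finite.exists_ne_map_eq_of_infinite fun t => π (next^[t] a)
  rcases hst.lt_or_gt with hst | hts
  · exact ⟨_, _, hreach s, hchain s t hst, heq⟩
  · exact ⟨_, _, hreach t, hchain t s hts, heq.symm⟩

namespace RNFAwtl

variable {Q α : Type} (A : RNFAwtl Q α)

def IsFinal (c : Q × List α) : Prop := (∀ x ∈ c.2, x ∈ A.τ c.1) ∧ c.1 ∈ A.Facc

def AcceptsFrom (c : Q × List α) : Prop :=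
  ∃ d, ReflTransGen A.Step c d ∧ A.IsFinal d

theorem accepts_iff_acceptsFrom {q₀ : Q} (hI : A.I = {q₀}) (w : List α) :
    A.Accepts w ↔ A.AcceptsFrom (q₀, w) := by
  simp [Accepts, AcceptsFrom, IsFinal, hI]

theorem not_step_of_isFinal {c d : Q × List α} (hc : A.IsFinal c) : ¬ A.Step c d := by
  rintro (⟨u, x, v, hw, -, hx, -⟩ | ⟨-, hd, -⟩)
  · exact hx (hc.1 x (by simp [hw]))
  · simp [A.accEnd _ hc.2] at hd

variable {A}

theorem Deterministic.step_rightUnique (hA : A.Deterministic) : Relator.RightUnique A.Step := by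
  rintro c d d' (⟨u, x, v, hw, hu, hx, hd, hdw⟩ | ⟨hτ, hd, hdw⟩)
    (⟨u', x', v', hw', hu', hx', hd', hdw'⟩ | ⟨hτ', hd', hdw'⟩)
  · obtain ⟨rfl, rfl, rfl⟩ :=
      List.append_cons_inj_of_forall_mem_of_not_mem (hw.symm.trans hw') hu hx hu' hx'
    exact Prod.ext (hA.2.1 _ _ hd hd') (hdw.trans hdw'.symm)
  · exact absurd (hτ' x (by simp [hw])) hx
  · exact absurd (hτ x' (by simp [hw'])) hx'
  · exact Prod.ext (hA.2.2 _ hd hd') (hdw.trans hdw'.symm)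

theorem Deterministic.acceptsFrom_iff (hA : A.Deterministic) {c d : Q × List α}
    (h : ReflTransGen A.Step c d) : A.AcceptsFrom c ↔ A.AcceptsFrom d := by
  refine ⟨fun ⟨f, hcf, hf⟩ => ⟨f, ?_, hf⟩, fun ⟨f, hdf, hf⟩ => ⟨f, h.trans hdf, hf⟩⟩
  rcases ReflTransGen.total_of_right_unique hA.step_rightUnique h hcf with hdf | hfd
  · exact hdf
  · rcases hfd.cases_head with rfl | ⟨e, hfe, -⟩
    · exact .refl
    · exact absurd hfe (A.not_step_of_isFinal hf)

theorem Deterministic.not_acceptsFrom_of_transGen (hA : A.Deterministic) {c : Q × List α}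
    (h : TransGen A.Step c c) : ¬ A.AcceptsFrom c := by
  obtain ⟨c₁, hcc₁, hc₁c⟩ := TransGen.head'_iff.1 h
  have back : ∀ d, ReflTransGen A.Step c d → ReflTransGen A.Step d c := by
    intro d hd
    induction hd with
    | refl => exact .refl
    | tail _ hde ih =>
      rcases ih.cases_head with rfl | ⟨e', hde', he'c⟩
      · rwa [hA.step_rightUnique hde hcc₁]
      · rwa [hA.step_rightUnique hde hde']
  rintro ⟨f, hcf, hf⟩
  rcases (back f hcf).cases_head with rfl | ⟨e, hfe, -⟩
  · exact A.not_step_of_isFinal hf hcc₁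
  · exact A.not_step_of_isFinal hf hfe

end RNFAwtl

def sortedWord (n m : ℕ) : List AB := List.replicate n .a ++ List.replicate m .b

namespace RNFAwtl

variable {Q : Type} {A : RNFAwtl Q AB}

variable (A) in
/-- `(q, x, y)` stands for the configuration `(q, a^(n-x) b^(m-y))` of a run on `a^n b^m`; as
long as both blocks are nonempty, a step of the machine depends on `q` only. -/
inductive SortedStep : Q × ℕ × ℕ → Q × ℕ × ℕ → Prop
  | readA {q q' x y} : AB.a ∉ A.τ q → q' ∈ A.δ q .a → SortedStep (q, x, y) (q', x + 1, y)
  | readB {q q' x y} : AB.a ∈ A.τ q → AB.b ∉ A.τ q → q' ∈ A.δ q .b →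
      SortedStep (q, x, y) (q', x, y + 1)
  | readEnd {q q' x y} : AB.a ∈ A.τ q → AB.b ∈ A.τ q → q' ∈ A.δend q →
      SortedStep (q, x, y) (q', x, y)

theorem SortedStep.le {c c' : Q × ℕ × ℕ} (h : A.SortedStep c c') :
    c.2.1 ≤ c'.2.1 ∧ c.2.2 ≤ c'.2.2 := by
  cases h <;> simp

theorem SortedStep.reflTransGen_le {c c' : Q × ℕ × ℕ} (h : ReflTransGen A.SortedStep c c') :
    c.2.1 ≤ c'.2.1 ∧ c.2.2 ≤ c'.2.2 := by
  induction h with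
  | refl => simp
  | tail _ hstep ih => exact ⟨ih.1.trans hstep.le.1, ih.2.trans hstep.le.2⟩

theorem SortedStep.step {c c' : Q × ℕ × ℕ} (h : A.SortedStep c c') {X Y : ℕ} (hx : c'.2.1 ≤ X)
    (hy : c'.2.2 ≤ Y) (z : List AB) :
    A.Step (c.1, sortedWord (X - c.2.1) (Y - c.2.2) ++ z)
      (c'.1, sortedWord (X - c'.2.1) (Y - c'.2.2) ++ z) := by
  cases h with
  | @readA q q' x y ha hq' =>
    refine Or.inl ⟨[], .a, sortedWord (X - (x + 1)) (Y - y) ++ z, ?_, by simp, ha, hq', rfl⟩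
    rw [show X - x = X - (x + 1) + 1 by simp at hx; omega]
    simp [sortedWord, List.replicate_succ]
  | @readB q q' x y ha hb hq' =>
    refine Or.inl ⟨List.replicate (X - x) .a, .b, List.replicate (Y - (y + 1)) .b ++ z, ?_,
      fun l hl => List.eq_of_mem_replicate hl ▸ ha, hb, hq', by simp [sortedWord]⟩
    rw [show Y - y = Y - (y + 1) + 1 by simp at hy; omega]
    simp [sortedWord, List.replicate_succ]
  | readEnd ha hb hq' =>
    exact Or.inr ⟨fun l _ => by cases l <;> assumption, hq', rfl⟩

theorem SortedStep.reflTransGen_step {c c' : Q × ℕ × ℕ}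
    (h : ReflTransGen A.SortedStep c c') {X Y : ℕ} (hx : c'.2.1 ≤ X) (hy : c'.2.2 ≤ Y)
    (z : List AB) :
    ReflTransGen A.Step (c.1, sortedWord (X - c.2.1) (Y - c.2.2) ++ z)
      (c'.1, sortedWord (X - c'.2.1) (Y - c'.2.2) ++ z) := by
  induction h with
  | refl => exact .refl
  | tail _ hstep ih =>
    exact (ih (hstep.le.1.trans hx) (hstep.le.2.trans hy)).tail (hstep.step hx hy z)

theorem SortedStep.exists_of_step {q : Q} {i j : ℕ} {d : Q × List AB}
    (h : A.Step (q, sortedWord (i + 1) (j + 1)) d) (x y : ℕ) : ∃ c', A.SortedStep (q, x, y) c' := by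
  rcases h with ⟨u, l, v, hw, hu, hl, hq', -⟩ | ⟨hτ, hq', -⟩
  · by_cases ha : AB.a ∈ A.τ q
    · cases l
      · exact absurd ha hl
      · exact ⟨_, .readB ha hl hq'⟩
    · cases u with
      | nil =>
        simp [sortedWord, List.replicate_succ] at hw
        exact ⟨_, .readA ha (hw.1 ▸ hq')⟩
      | cons l' u =>
        simp [sortedWord, List.replicate_succ] at hw
        exact absurd (hw.1 ▸ hu l' (by simp)) ha
  · exact ⟨_, .readEnd (hτ .a (by simp [sortedWord])) (hτ .b (by simp [sortedWord])) hq'⟩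

theorem SortedStep.reflTransGen_step_sortedWord {q₀ q : Q} {x y : ℕ}
    (h : ReflTransGen A.SortedStep (q₀, 0, 0) (q, x, y)) (i j : ℕ) (z : List AB) :
    ReflTransGen A.Step (q₀, sortedWord (x + i) (y + j) ++ z) (q, sortedWord i j ++ z) := by
  simpa using SortedStep.reflTransGen_step h (X := x + i) (Y := y + j) (by simp) (by simp) z

end RNFAwtl

namespace RNFAwtl.Deterministic

variable {Q : Type} {A : RNFAwtl Q AB} (hA : A.Deterministic) {q₀ q : Q} {x y : ℕ}
  (hreach : ReflTransGen A.SortedStep (q₀, 0, 0) (q, x, y))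
include hA hreach

theorem acceptsFrom_sortedWord_iff_append (i j : ℕ) :
    A.AcceptsFrom (q₀, sortedWord (x + i) (y + j)) ↔
      A.AcceptsFrom (q₀, sortedWord x y ++ sortedWord i j) := by
  have h₁ := SortedStep.reflTransGen_step_sortedWord hreach i j []
  have h₂ := SortedStep.reflTransGen_step_sortedWord hreach 0 0 (sortedWord i j)
  simp only [List.append_nil, Nat.add_zero] at h₁ h₂
  rw [hA.acceptsFrom_iff h₁, hA.acceptsFrom_iff h₂]
  simp [sortedWord]

theorem acceptsFrom_sortedWord_iff_of_same_state {x' y' : ℕ}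
    (hreach' : ReflTransGen A.SortedStep (q₀, 0, 0) (q, x', y')) (i j : ℕ) :
    A.AcceptsFrom (q₀, sortedWord (x + i) (y + j)) ↔
      A.AcceptsFrom (q₀, sortedWord (x' + i) (y' + j)) := by
  have h₁ := SortedStep.reflTransGen_step_sortedWord hreach i j []
  have h₂ := SortedStep.reflTransGen_step_sortedWord hreach' i j []
  simp only [List.append_nil] at h₁ h₂
  rw [hA.acceptsFrom_iff h₁, hA.acceptsFrom_iff h₂]

theorem acceptsFrom_sortedWord_iff_of_terminal (hterm : ∀ c', ¬ A.SortedStep (q, x, y) c')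
    (i j : ℕ) :
    A.AcceptsFrom (q₀, sortedWord (x + i + 1) (y + j + 1)) ↔
      AB.a ∈ A.τ q ∧ AB.b ∈ A.τ q ∧ q ∈ A.Facc := by
  have h := SortedStep.reflTransGen_step_sortedWord hreach (i + 1) (j + 1) []
  simp only [List.append_nil, ← add_assoc] at h
  rw [hA.acceptsFrom_iff h]
  constructor
  · rintro ⟨d, hd, hfin⟩
    rcases hd.cases_head with rfl | ⟨e, he, -⟩
    · exact ⟨hfin.1 .a (by simp [sortedWord]), hfin.1 .b (by simp [sortedWord]), hfin.2⟩
    · obtain ⟨c', hc'⟩ := SortedStep.exists_of_step he x y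
      exact absurd hc' (hterm c')
  · rintro ⟨ha, hb, hF⟩
    exact ⟨_, .refl, fun l _ => by cases l <;> assumption, hF⟩

theorem not_acceptsFrom_sortedWord_of_transGen
    (hcycle : TransGen A.SortedStep (q, x, y) (q, x, y)) (i j : ℕ) :
    ¬ A.AcceptsFrom (q₀, sortedWord (x + i) (y + j)) := by
  have h := SortedStep.reflTransGen_step_sortedWord hreach i j []
  simp only [List.append_nil] at h
  rw [hA.acceptsFrom_iff h]
  refine hA.not_acceptsFrom_of_transGen ?_
  obtain ⟨c₁, hstep, hback⟩ := TransGen.head'_iff.1 hcycle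
  obtain ⟨hx₁, hy₁⟩ := SortedStep.reflTransGen_le hback
  have hfirst := hstep.step (hx₁.trans (Nat.le_add_right x i)) (hy₁.trans (Nat.le_add_right y j)) []
  have hrest := SortedStep.reflTransGen_step hback (X := x + i) (Y := y + j) (by simp) (by simp) []
  simpa using TransGen.head' hfirst hrest

end RNFAwtl.Deterministic

theorem RNFAwtl.Deterministic.exists_sortedWord_period {Q : Type} [Finite Q] {A : RNFAwtl Q AB}
    (hA : A.Deterministic) (q₀ : Q) :
    ∃ N p r, 0 < p + r ∧
      (∀ n m, N ≤ n → N ≤ m →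
        (A.AcceptsFrom (q₀, sortedWord n m) ↔ A.AcceptsFrom (q₀, sortedWord (n + p) (m + r)))) ∧
      (0 < r → ∃ q x y, 0 < y ∧ ReflTransGen A.SortedStep (q₀, 0, 0) (q, x, y)) := by
  by_cases hhalt : ∃ c, ReflTransGen A.SortedStep (q₀, 0, 0) c ∧ ∀ c', ¬ A.SortedStep c c'
  · obtain ⟨⟨q, x, y⟩, hreach, hterm⟩ := hhalt
    refine ⟨x + y + 1, 1, 0, one_pos, fun n m hn hm => ?_, by simp⟩
    obtain ⟨i, rfl⟩ : ∃ i, n = x + i + 1 := ⟨n - x - 1, by omega⟩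
    obtain ⟨j, rfl⟩ : ∃ j, m = y + j + 1 := ⟨m - y - 1, by omega⟩
    have hconst := hA.acceptsFrom_sortedWord_iff_of_terminal hreach hterm
    rw [add_zero, show x + i + 1 + 1 = x + (i + 1) + 1 by omega, hconst, hconst]
  push Not at hhalt
  obtain ⟨⟨q, x, y⟩, ⟨q', x', y'⟩, hreach, hloop, rfl : q = q'⟩ :=
    exists_transGen_map_eq_of_forall_exists Prod.fst hhalt
  have hreach' := hreach.trans hloop.to_reflTransGen
  obtain ⟨hx, hy⟩ := SortedStep.reflTransGen_le hloop.to_reflTransGen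
  simp only at hx hy
  by_cases hcycle : x' = x ∧ y' = y
  · obtain ⟨rfl, rfl⟩ := hcycle
    refine ⟨x' + y', 1, 0, one_pos, fun n m hn hm => ?_, by simp⟩
    obtain ⟨i, rfl⟩ : ∃ i, n = x' + i := ⟨n - x', by omega⟩
    obtain ⟨j, rfl⟩ : ∃ j, m = y' + j := ⟨m - y', by omega⟩
    simp only [add_assoc, hA.not_acceptsFrom_sortedWord_of_transGen hreach hloop]
  · refine ⟨x + y, x' - x, y' - y, by omega, fun n m hn hm => ?_,
      fun hr => ⟨q, x', y', by omega, hreach'⟩⟩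
    obtain ⟨i, rfl⟩ : ∃ i, n = x + i := ⟨n - x, by omega⟩
    obtain ⟨j, rfl⟩ : ∃ j, m = y + j := ⟨m - y, by omega⟩
    rw [show x + i + (x' - x) = x' + i by omega, show y + j + (y' - y) = y' + j by omega]
    exact hA.acceptsFrom_sortedWord_iff_of_same_state hreach hreach' i j

theorem sortedWord_mem_Lor (n m : ℕ) : sortedWord n m ∈ Lor ↔ n = m ∨ 2 * n = m := by
  simp [sortedWord, Lor, Leq, L2eq, List.count_replicate]

theorem sortedWord_mem_Leq_inter_asbs (n m : ℕ) : sortedWord n m ∈ Leq ∩ asbs ↔ n = m := by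
  simp only [Set.mem_inter_iff]
  simp [sortedWord, Leq, asbs, List.count_replicate]
  exact fun _ => ⟨n, m, rfl⟩

theorem notMem_of_replicate_append_cons_mem_asbs {x : ℕ} {t : List AB}
    (h : List.replicate x AB.a ++ AB.b :: t ∈ asbs) : AB.a ∉ t := by
  obtain ⟨n, m, h⟩ := h
  induction x generalizing n with
  | zero =>
    rcases n with _ | n
    · rcases m with _ | m
      · simp at h
      · simp [List.replicate_succ] at h
        simp [h]
    · simp [List.replicate_succ] at h
  | succ x ih =>
    rcases n with _ | n
    · rcases m with _ | m <;> simp [List.replicate_succ] at h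
    · exact ih n (by simpa [List.replicate_succ] using h)

theorem sortedWord_append_sortedWord_notMem_asbs {x y i j : ℕ} (hy : 0 < y) (hi : 0 < i) :
    sortedWord x y ++ sortedWord i j ∉ asbs := by
  obtain ⟨y, rfl⟩ : ∃ y', y = y' + 1 := ⟨y - 1, by omega⟩
  intro h
  refine notMem_of_replicate_append_cons_mem_asbs (x := x)
    (t := List.replicate y .b ++ sortedWord i j) ?_ (by simp [sortedWord, hi.ne'])
  simpa [sortedWord, List.replicate_succ] using h

theorem Lor_notMem_RDFAwtlLangs : Lor ∉ RDFAwtlLangs AB := by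
  rintro ⟨Q, _, A, hA, hlang⟩
  obtain ⟨q₀, hI⟩ := hA.1
  have hacc : ∀ n m, A.AcceptsFrom (q₀, sortedWord n m) ↔ n = m ∨ 2 * n = m := fun n m => by
    rw [← A.accepts_iff_acceptsFrom hI, ← sortedWord_mem_Lor, ← hlang]
    rfl
  obtain ⟨N, p, r, hpr, hperiod, -⟩ := hA.exists_sortedWord_period q₀
  have h₁ := (hperiod (N + 1) (N + 1) (by omega) (by omega)).1 ((hacc _ _).2 (.inl rfl))
  have h₂ := (hperiod (N + 1 + p) (N + 1 + r) (by omega) (by omega)).1 h₁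
  have h₃ := (hperiod (N + 1) (2 * (N + 1)) (by omega) (by omega)).1 ((hacc _ _).2 (.inr rfl))
  rw [hacc] at h₁ h₂ h₃
  omega

theorem Leq_inter_asbs_notMem_RDFAwtlLangs : Leq ∩ asbs ∉ RDFAwtlLangs AB := by
  rintro ⟨Q, _, A, hA, hlang⟩
  obtain ⟨q₀, hI⟩ := hA.1
  have hacc : ∀ w, A.AcceptsFrom (q₀, w) ↔ w ∈ Leq ∩ asbs := fun w => by
    rw [← A.accepts_iff_acceptsFrom hI, ← hlang]
    rfl
  obtain ⟨N, p, r, hpr, hperiod, hreadB⟩ := hA.exists_sortedWord_period q₀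
  have h := (hperiod N N le_rfl le_rfl).1 ((hacc _).2 ((sortedWord_mem_Leq_inter_asbs N N).2 rfl))
  rw [hacc, sortedWord_mem_Leq_inter_asbs] at h
  obtain ⟨q, x, y, hy, hreach⟩ := hreadB (by omega)
  have hswap := (hA.acceptsFrom_sortedWord_iff_append hreach (y + 1) (x + 1)).1
    ((hacc _).2 ((sortedWord_mem_Leq_inter_asbs _ _).2 (by omega)))
  exact sortedWord_append_sortedWord_notMem_asbs hy y.succ_pos ((hacc _).1 hswap).2

/-- ℒ(RDFAwtl) is not closed under union, intersection with
regular sets, alphabetic morphisms, or commutative closure. -/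
theorem RDFAwtl_nonclosure_union_inter_morphism_com :
    Leq ∈ DFAwtlLangs AB ∧ L2eq ∈ DFAwtlLangs AB ∧
    Lor ∉ RDFAwtlLangs AB ∧
    (Leq ∩ asbs) ∉ RDFAwtlLangs AB ∧
    M ∈ DFAwtlLangs ABCD ∧
    (List.map φ) '' M = Lor ∧ (List.map φ) '' M ∉ RDFAwtlLangs AB ∧
    com R = Lor ∧ com R ∉ RDFAwtlLangs AB :=
  ⟨⟨_, inferInstance, eqDFA, eqDFA_deterministic, eqDFA_lang⟩,
    ⟨_, inferInstance, twoEqDFA, twoEqDFA_deterministic, twoEqDFA_lang⟩,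
    Lor_notMem_RDFAwtlLangs, Leq_inter_asbs_notMem_RDFAwtlLangs,
    ⟨_, inferInstance, mDFA, mDFA_deterministic, mDFA_lang⟩,
    image_map_φ_M_eq_Lor, image_map_φ_M_eq_Lor ▸ Lor_notMem_RDFAwtlLangs,
    com_R_eq_Lor, com_R_eq_Lor ▸ Lor_notMem_RDFAwtlLangs⟩
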